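/- arXiv:1405.1799 — 8 statements merged into one kernel-verified Lean document; each statement's English description precedes it below -/
import Mathlib

section
/- For real σ > 0, 0 < a ≤ 1, and z ∈ [-1,1] with z ≠ 0 and z ≠ 1 (or σ > 1 and z = 1), the series Φ(σ,a,z) = ∑_{n≥0} z^n/(n+a)^σ is strictly positive. -/
/-!
Write `b n = (n + a)^(-σ)`, a strictly decreasing null sequence. For `-1 ≤ z < 1` the partial
sums of `∑ zⁿ` are bounded, so Dirichlet's test gives convergence; for `z = 1` this is the
Hurwitz series, convergent for `σ > 1`. Positivity holds for every `z ≥ -1`: grouping the terms in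
pairs, `z²ᵏ (b₂ₖ + z b₂ₖ₊₁) ≥ z²ᵏ (b₂ₖ - b₂ₖ₊₁) ≥ 0`, and the first pair is strictly positive, so
the even partial sums increase from a positive value towards the limit.
-/

open Filter Finset Topology

theorem norm_geom_sum_le_of_norm_le_one {𝕜 : Type*} [NormedField 𝕜] {z : 𝕜} (hz : ‖z‖ ≤ 1)
    (hz1 : z ≠ 1) (n : ℕ) : ‖∑ i ∈ range n, z ^ i‖ ≤ 2 / ‖z - 1‖ := by
  rw [geom_sum_eq hz1, norm_div]
  gcongr
  calc ‖z ^ n - 1‖ ≤ ‖z‖ ^ n + ‖(1 : 𝕜)‖ := by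
        rw [← norm_pow]; exact norm_sub_le _ _
    _ ≤ 2 := by rw [norm_one]; linarith [pow_le_one₀ (norm_nonneg z) hz (n := n)]

theorem pos_of_tendsto_sum_range_of_pairs {f : ℕ → ℝ} {L : ℝ}
    (hpair : ∀ k, 0 ≤ f (2 * k) + f (2 * k + 1)) (h01 : 0 < f 0 + f 1)
    (hL : Tendsto (fun N ↦ ∑ n ∈ range N, f n) atTop (𝓝 L)) : 0 < L := by
  set g : ℕ → ℝ := fun N ↦ ∑ n ∈ range (2 * N), f n
  have hg : Monotone g := monotone_nat_of_le_succ fun k ↦ by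
    simp only [g, Nat.mul_succ, sum_range_succ]
    linarith [hpair k]
  have hgL : Tendsto g atTop (𝓝 L) :=
    hL.comp (tendsto_atTop_mono (fun n ↦ Nat.le_mul_of_pos_left n two_pos) tendsto_id)
  calc 0 < g 1 := by simpa [g, sum_range_succ] using h01
    _ ≤ L := hg.ge_of_tendsto hgL 1

section AntitoneWeights

variable {b : ℕ → ℝ}

theorem cauchySeq_sum_range_mul_pow_of_antitone (hb : Antitone b)
    (hb0 : Tendsto b atTop (𝓝 0)) {z : ℝ} (hz : -1 ≤ z) (hz1 : z < 1) :
    CauchySeq fun N ↦ ∑ n ∈ range N, b n * z ^ n :=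
  hb.cauchySeq_series_mul_of_tendsto_zero_of_bounded hb0
    (norm_geom_sum_le_of_norm_le_one (abs_le.mpr ⟨hz, hz1.le⟩) hz1.ne)

theorem pos_of_tendsto_sum_range_mul_pow_of_strictAnti (hb : StrictAnti b)
    (hb0 : Tendsto b atTop (𝓝 0)) {z L : ℝ} (hz : -1 ≤ z)
    (hL : Tendsto (fun N ↦ ∑ n ∈ range N, b n * z ^ n) atTop (𝓝 L)) : 0 < L := by
  have hb_nonneg : ∀ n, 0 ≤ b n := hb.antitone.le_of_tendsto hb0
  have hstep : ∀ n, b n - b (n + 1) ≤ b n + z * b (n + 1) := fun n ↦ by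
    nlinarith [hb_nonneg (n + 1)]
  refine pos_of_tendsto_sum_range_of_pairs (fun k ↦ ?_) ?_ hL
  · have hpair : b (2 * k) * z ^ (2 * k) + b (2 * k + 1) * z ^ (2 * k + 1)
        = z ^ (2 * k) * (b (2 * k) + z * b (2 * k + 1)) := by ring
    rw [hpair]
    exact mul_nonneg ((even_two_mul k).pow_nonneg z)
      ((sub_nonneg.mpr (hb.antitone (2 * k).le_succ)).trans (hstep (2 * k)))
  · have h0 := (sub_pos.mpr (hb zero_lt_one)).trans_le (hstep 0)
    simp only [zero_add] at h0
    simp only [pow_zero, pow_one, mul_one]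
    linarith

end AntitoneWeights

theorem strictAnti_inv_rpow_natCast_add {a σ : ℝ} (ha : 0 < a) (hσ : 0 < σ) :
    StrictAnti fun n : ℕ ↦ (((n : ℝ) + a) ^ σ)⁻¹ := fun m n hmn ↦ by
  have hmn' : (m : ℝ) < n := Nat.cast_lt.mpr hmn
  exact inv_strictAnti₀ (by positivity) (Real.rpow_lt_rpow (by positivity) (by linarith) hσ)

theorem tendsto_inv_rpow_natCast_add_atTop {a σ : ℝ} (hσ : 0 < σ) :
    Tendsto (fun n : ℕ ↦ (((n : ℝ) + a) ^ σ)⁻¹) atTop (𝓝 0) :=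
  ((tendsto_rpow_atTop hσ).comp
    (tendsto_atTop_add_const_right atTop a tendsto_natCast_atTop_atTop)).inv_tendsto_atTop

theorem lerchPhi_pos_general (σ a z : ℝ) (ha : 0 < a)
    (hz : (0 < σ ∧ -1 ≤ z ∧ z ≤ 1 ∧ z ≠ 0 ∧ z ≠ 1) ∨ (1 < σ ∧ z = 1)) :
    ∃ L : ℝ, 0 < L ∧
      Tendsto (fun N : ℕ => ∑ n ∈ range N, z ^ n / ((n : ℝ) + a) ^ σ)
        atTop (nhds L) := by
  have hσ : 0 < σ := by rcases hz with ⟨h, -⟩ | ⟨h, -⟩ <;> linarith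
  have hz_ge : -1 ≤ z := by rcases hz with ⟨-, h, -⟩ | ⟨-, rfl⟩ <;> linarith
  simp_rw [div_eq_inv_mul]
  obtain ⟨L, hL⟩ : ∃ L, Tendsto (fun N ↦ ∑ n ∈ range N, (((n : ℝ) + a) ^ σ)⁻¹ * z ^ n)
      atTop (𝓝 L) := by
    rcases hz with ⟨-, -, hz_le, -, hz_ne⟩ | ⟨hσ1, rfl⟩
    · exact cauchySeq_tendsto_of_complete <| cauchySeq_sum_range_mul_pow_of_antitone
        (strictAnti_inv_rpow_natCast_add ha hσ).antitone
        (tendsto_inv_rpow_natCast_add_atTop hσ) hz_ge (hz_le.lt_of_ne hz_ne)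
    · have hsum := (Real.summable_one_div_nat_add_rpow a σ).mpr hσ1
      simp only [one_div, abs_of_pos (add_pos_of_nonneg_of_pos (Nat.cast_nonneg _) ha)] at hsum
      simpa only [one_pow, mul_one] using ⟨_, hsum.hasSum.tendsto_sum_nat⟩
  exact ⟨L, pos_of_tendsto_sum_range_mul_pow_of_strictAnti
    (strictAnti_inv_rpow_natCast_add ha hσ) (tendsto_inv_rpow_natCast_add_atTop hσ) hz_ge hL, hL⟩

/-- For real σ > 0, 0 < a ≤ 1, and z ∈ [-1,1] with z ≠ 0 and z ≠ 1
(or σ > 1 and z = 1), the series Φ(σ,a,z) = ∑_{n≥0} z^n/(n+a)^σ converges to a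
strictly positive value. -/
theorem lerchPhi_pos (σ a z : ℝ) (ha : 0 < a) (ha1 : a ≤ 1)
    (hz : (0 < σ ∧ -1 ≤ z ∧ z ≤ 1 ∧ z ≠ 0 ∧ z ≠ 1) ∨ (1 < σ ∧ z = 1)) :
    ∃ L : ℝ, 0 < L ∧
      Tendsto (fun N : ℕ => ∑ n ∈ range N, z ^ n / ((n : ℝ) + a) ^ σ)
        atTop (nhds L) :=
  lerchPhi_pos_general σ a z ha hz
end

section
/- Define H(a,x) = e^{(1-a)x}/(e^x − 1) − 1/x for x > 0 and 0 < a ≤ 1. Then H(a,x) < 0 for all x > 0 if and only if a ≥ 1/2. -/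
/-! Clearing denominators, `H(a,x) < 0` says `x e^{(1-a)x} < e^x - 1`. For `a ≥ 1/2` this follows
from `e^{(1-a)x} ≤ e^{x/2}` and `x e^{x/2} < e^x - 1`, i.e. `x/2 < sinh (x/2)`. For `a < 1/2` it
fails at `x = 1/2 - a`: there `x e^{(1-a)x} ≥ x (1 + (1/2 + x) x) = x + x²/2 + x³`, which dominates
`e^x - 1` on `(0, 1]`. -/

open Real

theorem exp_div_exp_sub_one_sub_inv_neg_iff {x : ℝ} (hx : 0 < x) (y : ℝ) :
    exp y / (exp x - 1) - 1 / x < 0 ↔ x * exp y < exp x - 1 := by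
  have hden : 0 < exp x - 1 := sub_pos.2 (one_lt_exp_iff.2 hx)
  rw [sub_neg, div_lt_div_iff₀ hden hx, one_mul, mul_comm]

theorem mul_exp_half_lt_exp_sub_one {x : ℝ} (hx : 0 < x) : x * exp (x / 2) < exp x - 1 := by
  have hsinh : x / 2 < sinh (x / 2) := self_lt_sinh_iff.2 (by positivity)
  have hsq : exp (x / 2) * exp (x / 2) = exp x := by rw [← exp_add, add_halves]
  have hinv : exp (-(x / 2)) * exp (x / 2) = 1 := by rw [← exp_add, neg_add_cancel, exp_zero]
  rw [sinh_eq] at hsinh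
  nlinarith [exp_pos (x / 2)]

theorem exp_sub_one_le_cubic {x : ℝ} (hx₀ : 0 ≤ x) (hx₁ : x ≤ 1) :
    exp x - 1 ≤ x + x ^ 2 / 2 + x ^ 3 := by
  have h := exp_bound (x := x) (by rwa [abs_of_nonneg hx₀]) (n := 3) (by norm_num)
  simp only [Finset.sum_range_succ, Finset.sum_range_zero, abs_of_nonneg hx₀] at h
  norm_num [Nat.factorial] at h
  nlinarith [(abs_le.1 h).2, pow_nonneg hx₀ 3]

theorem exp_sub_one_le_mul_exp_half_add_mul {x : ℝ} (hx₀ : 0 ≤ x) (hx₁ : x ≤ 1) :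
    exp x - 1 ≤ x * exp ((1 / 2 + x) * x) :=
  calc exp x - 1 ≤ x + x ^ 2 / 2 + x ^ 3 := exp_sub_one_le_cubic hx₀ hx₁
    _ = x * (1 + (1 / 2 + x) * x) := by ring
    _ ≤ x * exp ((1 / 2 + x) * x) := by gcongr; linarith [add_one_le_exp ((1 / 2 + x) * x)]

theorem H_neg_iff_general (a : ℝ) (ha : 0 < a) :
    (∀ x : ℝ, 0 < x →
        Real.exp ((1 - a) * x) / (Real.exp x - 1) - 1 / x < 0) ↔ 1 / 2 ≤ a := by
  constructor
  · intro h
    by_contra! ha2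
    have hx : 0 < 1 / 2 - a := by linarith
    have hlt := (exp_div_exp_sub_one_sub_inv_neg_iff hx _).1 (h _ hx)
    have hle := exp_sub_one_le_mul_exp_half_add_mul hx.le (by linarith)
    rw [show 1 / 2 + (1 / 2 - a) = 1 - a by ring] at hle
    exact hlt.not_ge hle
  · intro ha2 x hx
    rw [exp_div_exp_sub_one_sub_inv_neg_iff hx]
    calc x * exp ((1 - a) * x) ≤ x * exp (x / 2) := by gcongr; nlinarith
      _ < exp x - 1 := mul_exp_half_lt_exp_sub_one hx

/-- With H(a,x) = e^{(1-a)x}/(e^x − 1) − 1/x for x > 0 and 0 < a ≤ 1,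
H(a,x) < 0 for all x > 0 if and only if a ≥ 1/2. -/
theorem H_neg_iff (a : ℝ) (ha : 0 < a) (ha1 : a ≤ 1) :
    (∀ x : ℝ, 0 < x →
        Real.exp ((1 - a) * x) / (Real.exp x - 1) - 1 / x < 0) ↔ 1 / 2 ≤ a :=
  H_neg_iff_general a ha
end

section
/- For 0 < a ≤ 1 and x > 0, define h(a,x) = x e^{(1-a)x} − e^x + 1. If a ≥ 1/2 then h(a,x) < 0 for all x > 0. -/
/-!
Since `(1 - a) x ≤ x / 2`, it suffices to treat `a = 1/2`. There
`e^x - 1 = 2 e^{x/2} sinh (x/2) > x e^{x/2}`, because `sinh t > t` for `t > 0`.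
-/

open Real

theorem mul_exp_mul_lt_exp_sub_one {c x : ℝ} (hc : c ≤ 1 / 2) (hx : 0 < x) :
    x * exp (c * x) < exp x - 1 :=
  calc x * exp (c * x) ≤ x * exp (x / 2) := by gcongr; nlinarith
    _ < exp x - 1 := mul_exp_half_lt_exp_sub_one hx

theorem h_neg_of_half_le_general (a : ℝ) (haha : 1 / 2 ≤ a) :
    ∀ x : ℝ, 0 < x → x * Real.exp ((1 - a) * x) - Real.exp x + 1 < 0 := by
  intro x hx
  have := mul_exp_mul_lt_exp_sub_one (c := 1 - a) (by linarith) hx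
  linarith

/-- For 0 < a ≤ 1 with a ≥ 1/2, h(a,x) = x e^{(1-a)x} − e^x + 1 < 0
for all x > 0. -/
theorem h_neg_of_half_le (a : ℝ) (ha : 0 < a) (ha1 : a ≤ 1) (haha : 1 / 2 ≤ a) :
    ∀ x : ℝ, 0 < x → x * Real.exp ((1 - a) * x) - Real.exp x + 1 < 0 :=
  h_neg_of_half_le_general a haha
end

section
/- For real s with 0 < s < 1 and 0 < a ≤ 1, Γ(s)·ζ(s,a) = ∫_0^∞ H(a,x) x^{s-1} dx, where H(a,x) = e^{(1-a)x}/(e^x−1) − 1/x. -/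
/-!
The kernel `e^{(1-a)x} / (e^x - 1) = ∑ₙ e^{-(n+a)x}` has Mellin transform `Γ(z) ζ(z, a)` for
`re z > 1`. Removing its pole `1 / x` on `(0, 1]` only leaves a function that is bounded near `0`
and still decays exponentially, so its Mellin transform is holomorphic on `re z > 0` and equals
`Γ(z) ζ(z, a) - 1 / (z - 1)` there by analytic continuation. For `0 < re z < 1` the missing piece
`1 / x` on `(1, ∞)` has Mellin transform `-1 / (z - 1)`, which cancels that pole term.
-/

open MeasureTheory Set
open Complex Filter Asymptotics Topology

noncomputable def hurwitzKernel (a x : ℝ) : ℝ := Real.exp ((1 - a) * x) / (Real.exp x - 1)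

lemma hurwitzKernel_eq_exp_neg_div (a x : ℝ) :
    hurwitzKernel a x = Real.exp (-a * x) / (1 - Real.exp (-x)) := by
  rw [hurwitzKernel, ← mul_div_mul_right _ _ (Real.exp_ne_zero (-x))]
  congr 1
  · rw [← Real.exp_add]; ring_nf
  · rw [sub_mul, ← Real.exp_add, add_neg_cancel, Real.exp_zero, one_mul]

lemma hasSum_hurwitzKernel (a : ℝ) {x : ℝ} (hx : 0 < x) :
    HasSum (fun n : ℕ => Real.exp (-(n + a) * x)) (hurwitzKernel a x) := by
  have hq : Real.exp (-x) < 1 := Real.exp_lt_one_iff.mpr (neg_neg_of_pos hx)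
  have hterm : (fun n : ℕ => Real.exp (-(n + a) * x))
      = fun n => Real.exp (-a * x) * Real.exp (-x) ^ n := by
    ext n
    rw [← Real.exp_nat_mul, ← Real.exp_add]
    ring_nf
  rw [hterm, hurwitzKernel_eq_exp_neg_div, div_eq_mul_inv]
  exact (hasSum_geometric_of_lt_one (Real.exp_pos _).le hq).mul_left _

lemma continuousOn_hurwitzKernel (a : ℝ) : ContinuousOn (hurwitzKernel a) (Ioi 0) :=
  (by fun_prop : Continuous fun x => Real.exp ((1 - a) * x)).continuousOn.div
    (by fun_prop) fun _ hx => (sub_pos.mpr (Real.one_lt_exp_iff.mpr hx)).ne'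

lemma hurwitzKernel_isBigO_atTop (a : ℝ) :
    hurwitzKernel a =O[atTop] fun x => Real.exp (-a * x) := by
  have hlim : Tendsto (fun x => (1 - Real.exp (-x))⁻¹) atTop (𝓝 1) := by
    simpa using (Real.tendsto_exp_neg_atTop_nhds_zero.const_sub 1).inv₀ (by norm_num)
  refine ((isBigO_refl _ atTop).mul (hlim.isBigO_one ℝ)).congr (fun x => ?_) fun _ => mul_one _
  rw [hurwitzKernel_eq_exp_neg_div, div_eq_mul_inv]

lemma abs_hurwitzKernel_sub_inv_le {a x : ℝ} (ha : |1 - a| ≤ 1) (hx0 : 0 < x) (hx1 : x ≤ 1) :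
    |hurwitzKernel a x - 1 / x| ≤ 3 := by
  have hE : 0 < Real.exp x - 1 := sub_pos.mpr (Real.one_lt_exp_iff.mpr hx0)
  have hpos : 0 < x * (Real.exp x - 1) := mul_pos hx0 hE
  have hid : hurwitzKernel a x - 1 / x
      = (x * (Real.exp ((1 - a) * x) - 1) - (Real.exp x - 1 - x)) / (x * (Real.exp x - 1)) := by
    rw [hurwitzKernel, div_sub_div _ _ hE.ne' hx0.ne', mul_comm (Real.exp x - 1) x]
    ring
  have hx : |x| ≤ 1 := by rwa [abs_of_pos hx0]
  have hax : |(1 - a) * x| ≤ 1 := by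
    rw [abs_mul, abs_of_pos hx0]; nlinarith [abs_nonneg (1 - a)]
  have hnum : |x * (Real.exp ((1 - a) * x) - 1) - (Real.exp x - 1 - x)| ≤ 3 * x ^ 2 := by
    have h1 := Real.abs_exp_sub_one_le hax
    have h2 := Real.abs_exp_sub_one_sub_id_le hx
    rw [abs_mul, abs_of_pos hx0] at h1
    calc _ ≤ x * |Real.exp ((1 - a) * x) - 1| + |Real.exp x - 1 - x| := by
          refine (abs_sub _ _).trans ?_
          rw [abs_mul, abs_of_pos hx0]
      _ ≤ x * (2 * (|1 - a| * x)) + x ^ 2 := by gcongr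
      _ ≤ 3 * x ^ 2 := by nlinarith
  have hden : x ^ 2 ≤ x * (Real.exp x - 1) := by nlinarith [Real.add_one_le_exp x]
  rw [hid, abs_div, abs_of_pos hpos, div_le_iff₀ hpos]
  linarith

lemma hurwitzKernel_sub_inv_isBigO_nhdsGT {a : ℝ} (ha : |1 - a| ≤ 1) :
    (fun x => hurwitzKernel a x - 1 / x) =O[𝓝[>] 0] fun _ => (1 : ℝ) := by
  refine isBigO_iff.mpr ⟨3, ?_⟩
  filter_upwards [Ioc_mem_nhdsGT zero_lt_one] with x ⟨hx0, hx1⟩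
  simpa using abs_hurwitzKernel_sub_inv_le ha hx0 hx1

lemma hasMellin_one_Ioi {s : ℂ} (hs : re s < 0) :
    HasMellin (indicator (Ioi 1) (fun _ => 1 : ℝ → ℂ)) s (-1 / s) := by
  have hs' : (s - 1).re < -1 := by rw [sub_re, one_re]; linarith
  simp_rw [HasMellin, mellin, MellinConvergent, ← indicator_smul, IntegrableOn,
    integrable_indicator_iff measurableSet_Ioi, smul_eq_mul, integral_indicator measurableSet_Ioi,
    mul_one, IntegrableOn, Measure.restrict_restrict_of_subset (Ioi_subset_Ioi zero_le_one)]
  rw [← IntegrableOn]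
  refine ⟨integrableOn_Ioi_cpow_of_lt hs' one_pos, ?_⟩
  rw [integral_Ioi_cpow_of_lt hs' one_pos, sub_add_cancel, ofReal_one, one_cpow, neg_div]

lemma hasMellin_cpow_Ioi (a : ℂ) {s : ℂ} (hs : re s + re a < 0) :
    HasMellin (indicator (Ioi 1) (fun t => ↑t ^ a : ℝ → ℂ)) s (-1 / (s + a)) := by
  have := hasMellin_one_Ioi (by rwa [add_re] : (s + a).re < 0)
  simp_rw [HasMellin, ← MellinConvergent.cpow_smul, ← mellin_cpow_smul, ← indicator_smul,
    smul_eq_mul, mul_one] at this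
  exact this

lemma mellin_ofReal (f : ℝ → ℝ) (s : ℝ) :
    mellin (fun x => (f x : ℂ)) s
      = ((∫ x in Ioi (0 : ℝ), f x * x ^ (s - 1) : ℝ) : ℂ) := by
  rw [mellin, ← integral_complex_ofReal]
  refine setIntegral_congr_fun measurableSet_Ioi fun x (hx : 0 < x) => ?_
  rw [smul_eq_mul, ofReal_mul, ofReal_cpow hx.le, mul_comm]
  push_cast
  rfl

lemma mellin_congr_of_eqOn {E : Type*} [NormedAddCommGroup E] [NormedSpace ℂ E] {f g : ℝ → E}
    (h : EqOn f g (Ioi 0)) (s : ℂ) : mellin f s = mellin g s :=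
  setIntegral_congr_fun measurableSet_Ioi fun _ hx => by rw [h hx]

lemma mellin_hurwitzKernel {a : ℝ} (ha : 0 < a) (ha1 : a ≤ 1) {z : ℂ} (hz : 1 < re z) :
    mellin (fun x => (hurwitzKernel a x : ℂ)) z
      = Gamma z * HurwitzZeta.hurwitzZeta (a : UnitAddCircle) z := by
  have hsum : Summable fun n : ℕ => ‖(1 : ℂ)‖ / ((n : ℝ) + a) ^ z.re := by
    have habs (n : ℕ) : |(n : ℝ) + a| = n + a := abs_of_pos (by positivity)
    simpa [habs] using (Real.summable_one_div_nat_add_rpow a z.re).mpr hz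
  have hmellin := hasSum_mellin (a := fun _ => 1) (p := fun n : ℕ => n + a)
    (fun n => Or.inr (by positivity)) (by linarith)
    (fun t ht => by simpa using Complex.hasSum_ofReal.mpr (hasSum_hurwitzKernel a ht)) hsum
  have hzeta := (HurwitzZeta.hasSum_hurwitzZeta_of_one_lt_re ⟨ha.le, ha1⟩ hz).mul_left (Gamma z)
  push_cast at hmellin
  simp only [mul_one_div, mul_one] at hzeta hmellin
  exact hmellin.unique hzeta

noncomputable def hurwitzKernelSubPole (a x : ℝ) : ℂ :=
  hurwitzKernel a x - indicator (Ioc 0 1) (fun t : ℝ => (t : ℂ) ^ (-1 : ℂ)) x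

lemma hurwitzKernel_sub_inv_eqOn_Ioi (a : ℝ) :
    EqOn (fun x => ((hurwitzKernel a x - 1 / x : ℝ) : ℂ))
      (fun x => hurwitzKernelSubPole a x
        - indicator (Ioi 1) (fun t : ℝ => (t : ℂ) ^ (-1 : ℂ)) x) (Ioi 0) := by
  intro x (hx : 0 < x)
  by_cases hx1 : x ≤ 1
  · simp [hurwitzKernelSubPole, hx, hx1, cpow_neg_one]
  · simp [hurwitzKernelSubPole, hx1, lt_of_not_ge hx1, cpow_neg_one]

lemma locallyIntegrableOn_hurwitzKernelSubPole (a : ℝ) :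
    LocallyIntegrableOn (hurwitzKernelSubPole a) (Ioi 0) := by
  have hinv : ContinuousOn (fun t : ℝ => (t : ℂ) ^ (-1 : ℂ)) (Ioi 0) :=
    fun t (ht : 0 < t) => (continuousAt_ofReal_cpow_const _ _ (Or.inr ht.ne')).continuousWithinAt
  have hpole : LocallyIntegrableOn
      (indicator (Ioc 0 1) fun t : ℝ => (t : ℂ) ^ (-1 : ℂ)) (Ioi 0) := fun x hx => by
    obtain ⟨U, hU, hint⟩ := hinv.locallyIntegrableOn (μ := volume) measurableSet_Ioi x hx
    exact ⟨U, hU, hint.indicator measurableSet_Ioc⟩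
  exact ((continuous_ofReal.comp_continuousOn (continuousOn_hurwitzKernel a)).locallyIntegrableOn
    measurableSet_Ioi).sub hpole

lemma hurwitzKernelSubPole_isBigO_atTop (a : ℝ) :
    hurwitzKernelSubPole a =O[atTop] fun x => Real.exp (-a * x) := by
  refine (isBigO_ofReal_left.mpr (hurwitzKernel_isBigO_atTop a)).congr' ?_ EventuallyEq.rfl
  filter_upwards [eventually_gt_atTop 1] with x hx
  simp [hurwitzKernelSubPole, not_le.mpr hx]

lemma hurwitzKernelSubPole_isBigO_nhdsGT {a : ℝ} (ha : |1 - a| ≤ 1) :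
    hurwitzKernelSubPole a =O[𝓝[>] 0] (· ^ (-(0 : ℝ))) := by
  refine (isBigO_ofReal_left.mpr (hurwitzKernel_sub_inv_isBigO_nhdsGT ha)).congr' ?_ ?_
  · filter_upwards [Ioc_mem_nhdsGT zero_lt_one] with x hx
    simp [hurwitzKernelSubPole, hx, cpow_neg_one]
  · filter_upwards [self_mem_nhdsWithin] with x hx
    simp

lemma mellinConvergent_hurwitzKernelSubPole {a : ℝ} (ha : 0 < a) (ha' : |1 - a| ≤ 1) {z : ℂ}
    (hz : 0 < re z) : MellinConvergent (hurwitzKernelSubPole a) z :=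
  mellinConvergent_of_isBigO_rpow_exp ha (locallyIntegrableOn_hurwitzKernelSubPole a)
    (hurwitzKernelSubPole_isBigO_atTop a) (hurwitzKernelSubPole_isBigO_nhdsGT ha') hz

lemma differentiableAt_mellin_hurwitzKernelSubPole {a : ℝ} (ha : 0 < a) (ha' : |1 - a| ≤ 1)
    {z : ℂ} (hz : 0 < re z) : DifferentiableAt ℂ (mellin (hurwitzKernelSubPole a)) z :=
  mellin_differentiableAt_of_isBigO_rpow_exp ha (locallyIntegrableOn_hurwitzKernelSubPole a)
    (hurwitzKernelSubPole_isBigO_atTop a) (hurwitzKernelSubPole_isBigO_nhdsGT ha') hz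

lemma mellin_hurwitzKernelSubPole_of_one_lt_re {a : ℝ} (ha : 0 < a) (ha1 : a ≤ 1) {z : ℂ}
    (hz : 1 < re z) :
    mellin (hurwitzKernelSubPole a) z
      = Gamma z * HurwitzZeta.hurwitzZeta (a : UnitAddCircle) z - 1 / (z - 1) := by
  have hpole := hasMellin_cpow_Ioc (-1) (s := z) (by rw [neg_re, one_re]; linarith)
  have hsum := hasMellin_add
    (mellinConvergent_hurwitzKernelSubPole ha (abs_sub_le_iff.mpr ⟨by linarith, by linarith⟩)
      (by linarith)) hpole.1
  simp only [hurwitzKernelSubPole, sub_add_cancel, hpole.2] at hsum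
  rw [← mellin_hurwitzKernel ha ha1 hz, hsum.2, ← sub_eq_add_neg]
  ring

lemma mellin_hurwitzKernelSubPole_of_re_lt_one {a : ℝ} (ha : 0 < a) (ha1 : a ≤ 1) {z : ℂ}
    (hz0 : 0 < re z) (hz1 : re z < 1) :
    mellin (hurwitzKernelSubPole a) z
      = Gamma z * HurwitzZeta.hurwitzZeta (a : UnitAddCircle) z - 1 / (z - 1) := by
  -- `U` avoids the pole at `1`, is connected, and meets the half-plane `re w > 1`.
  let U : Set ℂ := {w | 0 < re w ∧ re w < 1} ∪ {w | 0 < re w ∧ 0 < im w}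
  have hUo : IsOpen U :=
    ((isOpen_lt continuous_const continuous_re).inter
      (isOpen_lt continuous_re continuous_const)).union
    ((isOpen_lt continuous_const continuous_re).inter (isOpen_lt continuous_const continuous_im))
  have hUp : IsPreconnected U :=
    ((convex_halfSpace_re_gt 0).inter (convex_halfSpace_re_lt 1)).isPreconnected.union
      (⟨1 / 2, 1 / 2⟩ : ℂ) (by norm_num) (by norm_num)
      ((convex_halfSpace_re_gt 0).inter (convex_halfSpace_im_gt 0)).isPreconnected
  have hU (w : ℂ) (hw : w ∈ U) : 0 < re w ∧ w ≠ 1 := by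
    rcases hw with ⟨h0, h1⟩ | ⟨h0, h1⟩
    · exact ⟨h0, fun h => by simp [h] at h1⟩
    · exact ⟨h0, fun h => by simp [h] at h1⟩
  have ha' : |1 - a| ≤ 1 := abs_sub_le_iff.mpr ⟨by linarith, by linarith⟩
  have hF : AnalyticOnNhd ℂ (mellin (hurwitzKernelSubPole a)) U :=
    DifferentiableOn.analyticOnNhd (fun w hw => (differentiableAt_mellin_hurwitzKernelSubPole
      ha ha' (hU w hw).1).differentiableWithinAt) hUo
  have hG : AnalyticOnNhd ℂ
      (fun w => Gamma w * HurwitzZeta.hurwitzZeta (a : UnitAddCircle) w - 1 / (w - 1)) U := by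
    refine DifferentiableOn.analyticOnNhd (fun w hw => DifferentiableAt.differentiableWithinAt ?_)
      hUo
    obtain ⟨hw0, hw1⟩ := hU w hw
    have hGamma : DifferentiableAt ℂ Gamma w := differentiableAt_Gamma w fun m hm => by
      rw [hm, neg_re, natCast_re] at hw0
      linarith [m.cast_nonneg (α := ℝ)]
    exact (hGamma.mul (HurwitzZeta.differentiableAt_hurwitzZeta _ hw1)).sub
      ((differentiableAt_const 1).div (differentiableAt_id.sub_const 1) (sub_ne_zero.mpr hw1))
  have hV : {w : ℂ | 1 < re w} ∈ 𝓝 (2 + I) :=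
    (continuous_re.isOpen_preimage _ isOpen_Ioi).mem_nhds (by simp)
  exact hF.eqOn_of_preconnected_of_eventuallyEq hG hUp (Or.inr (by simp))
    (Filter.eventually_of_mem hV fun w hw => mellin_hurwitzKernelSubPole_of_one_lt_re ha ha1 hw)
    (Or.inl ⟨hz0, hz1⟩)

/-- For real 0 < s < 1 and 0 < a ≤ 1,
Γ(s)·ζ(s,a) = ∫_0^∞ H(a,x) x^{s-1} dx with H(a,x) = e^{(1-a)x}/(e^x−1) − 1/x,
where ζ(·,a) is the analytically continued Hurwitz zeta function. -/
theorem gamma_mul_hurwitzZeta_eq_integral (s a : ℝ) (hs0 : 0 < s) (hs1 : s < 1)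
    (ha : 0 < a) (ha1 : a ≤ 1) :
    (Real.Gamma s : ℂ) * HurwitzZeta.hurwitzZeta (a : UnitAddCircle) (s : ℂ)
      = ((∫ x in Ioi (0 : ℝ),
          (Real.exp ((1 - a) * x) / (Real.exp x - 1) - 1 / x) * x ^ (s - 1)) : ℝ) := by
  have hz0 : 0 < (s : ℂ).re := by rwa [ofReal_re]
  have hz1 : (s : ℂ).re < 1 := by rwa [ofReal_re]
  have hpole := hasMellin_cpow_Ioi (-1) (s := s) (by rw [neg_re, one_re]; linarith)
  have hdiff := hasMellin_sub (mellinConvergent_hurwitzKernelSubPole ha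
    (abs_sub_le_iff.mpr ⟨by linarith, by linarith⟩) hz0) hpole.1
  calc (Real.Gamma s : ℂ) * HurwitzZeta.hurwitzZeta (a : UnitAddCircle) (s : ℂ)
      = mellin (hurwitzKernelSubPole a) s + 1 / ((s : ℂ) - 1) := by
        rw [mellin_hurwitzKernelSubPole_of_re_lt_one ha ha1 hz0 hz1, Complex.Gamma_ofReal]
        ring
    _ = mellin (fun x => ((hurwitzKernel a x - 1 / x : ℝ) : ℂ)) s := by
        rw [mellin_congr_of_eqOn (hurwitzKernel_sub_inv_eqOn_Ioi a), hdiff.2, hpole.2]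
        ring
    _ = _ := mellin_ofReal _ s
end

section
/- If a ≥ 1/2 (and a ≤ 1), then ζ(σ,a) < 0 for every real σ with 0 < σ < 1. -/
open Complex Set Filter Topology HurwitzZeta

/-!
For `Re s > 1`, regrouping the Hurwitz series against the telescoping sum of `(n + a + 1/2)^(1-s)`
gives, with `T(t, s) = (1 - s) t^(-s) - ((t + 1/2)^(1-s) - (t - 1/2)^(1-s))`,
`(1 - s) ζ(s, a) = (1 - s) a^(-s) - (a + 1/2)^(1-s) + ∑_{n ≥ 0} T(n + 1 + a, s)`.
Since `T(t, s)` is `1 - s` times the error of the midpoint rule for `∫_{t-1/2}^{t+1/2} x^(-s) dx`,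
it is `O(|s|^2 t^(-Re s - 1))`; the right-hand side is therefore holomorphic on `Re s > 0`, and the
identity persists there. For real `0 < σ < 1` each `T(n + 1 + a, σ)` is `≤ 0`, because `x^(-σ)`
is convex and the midpoint rule underestimates its integral, while
`(1 - σ) a^(-σ) < (a + 1/2)^(1-σ)` for `a ≥ 1/2`. Dividing by `1 - σ > 0` gives `ζ(σ, a) < 0`.
-/

theorem hasSum_sub_of_tendsto {G : Type*} [AddCommGroup G] [TopologicalSpace G]
    [IsTopologicalAddGroup G] [T2Space G] {f : ℕ → G} {l : G}
    (hs : Summable fun n ↦ f (n + 1) - f n) (hf : Tendsto f atTop (𝓝 l)) :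
    HasSum (fun n ↦ f (n + 1) - f n) (l - f 0) := by
  convert hs.hasSum
  exact tendsto_nhds_unique ((hf.sub_const (f 0)).congr fun N ↦ (Finset.sum_range_sub f N).symm)
    hs.hasSum.tendsto_sum_nat

theorem norm_sub_sub_smul_deriv_le {E : Type*} [NormedAddCommGroup E] [NormedSpace ℝ E]
    {f f' f'' : ℝ → E} {h C : ℝ} (hh : 0 ≤ h)
    (hf : ∀ u ∈ Icc (-h) h, HasDerivAt f (f' u) u)
    (hf' : ∀ u ∈ Icc (-h) h, HasDerivAt f' (f'' u) u)
    (hC : ∀ u ∈ Icc (-h) h, ‖f'' u‖ ≤ C) :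
    ‖f h - f (-h) - (2 * h) • f' 0‖ ≤ 2 * C * h ^ 2 := by
  have hleft : -h ∈ Icc (-h) h := ⟨le_rfl, by linarith⟩
  have hright : h ∈ Icc (-h) h := ⟨by linarith, le_rfl⟩
  have hzero : (0 : ℝ) ∈ Icc (-h) h := ⟨by linarith, hh⟩
  have hC0 : 0 ≤ C := (norm_nonneg _).trans (hC 0 hzero)
  have hf'_sub : ∀ u ∈ Icc (-h) h, ‖f' u - f' 0‖ ≤ C * h := fun u hu ↦
    calc ‖f' u - f' 0‖ ≤ C * ‖u - 0‖ :=
          (convex_Icc _ _).norm_image_sub_le_of_norm_hasDerivWithin_le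
            (fun v hv ↦ (hf' v hv).hasDerivWithinAt) hC hzero hu
      _ ≤ C * h := by
          rw [sub_zero, Real.norm_eq_abs]
          exact mul_le_mul_of_nonneg_left (abs_le.2 hu) hC0
  have hχ : ∀ u ∈ Icc (-h) h,
      HasDerivWithinAt (fun v ↦ f v - v • f' 0) (f' u - f' 0) (Icc (-h) h) u := fun u hu ↦ by
    have : HasDerivAt (fun v ↦ f v - v • f' 0) (f' u - (1 : ℝ) • f' 0) u :=
      (hf u hu).sub ((hasDerivAt_id' u).smul_const (f' 0))
    simpa only [one_smul] using this.hasDerivWithinAt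
  calc ‖f h - f (-h) - (2 * h) • f' 0‖ = ‖(f h - h • f' 0) - (f (-h) - (-h) • f' 0)‖ := by
        congr 1; rw [two_mul, add_smul, neg_smul]; abel
    _ ≤ C * h * ‖h - -h‖ :=
        (convex_Icc _ _).norm_image_sub_le_of_norm_hasDerivWithin_le hχ hf'_sub hleft hright
    _ = 2 * C * h ^ 2 := by
        rw [Real.norm_eq_abs, abs_of_nonneg (by linarith)]; ring

namespace Real

theorem two_mul_rpow_neg_le_add {t u σ : ℝ} (hu : |u| < t) (hσ : 0 ≤ σ) :
    2 * t ^ (-σ) ≤ (t + u) ^ (-σ) + (t - u) ^ (-σ) := by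
  obtain ⟨hu₁, hu₂⟩ := abs_lt.1 hu
  have ht : 0 < t := (abs_nonneg u).trans_lt hu
  have hp : 0 < (t + u) ^ (-σ) := rpow_pos_of_pos (by linarith) _
  have hq : 0 < (t - u) ^ (-σ) := rpow_pos_of_pos (by linarith) _
  have hm : 0 < t ^ (-σ) := rpow_pos_of_pos ht _
  have hprod : t ^ (-σ) * t ^ (-σ) ≤ (t + u) ^ (-σ) * (t - u) ^ (-σ) := by
    rw [← mul_rpow ht.le ht.le, ← mul_rpow (by linarith) (by linarith)]
    exact rpow_le_rpow_of_nonpos (by nlinarith) (by nlinarith [sq_nonneg u]) (by linarith)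
  nlinarith [sq_nonneg ((t + u) ^ (-σ) - (t - u) ^ (-σ))]

theorem two_mul_mul_rpow_neg_le_integral {t h σ : ℝ} (hh : 0 ≤ h) (ht : h < t) (hσ : 0 ≤ σ) :
    2 * h * t ^ (-σ) ≤ ∫ x in t - h..t + h, x ^ (-σ) := by
  have hint : ∀ g : ℝ → ℝ, Continuous g → (∀ u ∈ Icc (-h) h, 0 < g u) →
      IntervalIntegrable (fun u ↦ g u ^ (-σ)) MeasureTheory.volume (-h) h :=
    fun g hg hpos ↦ (hg.continuousOn.rpow_const fun u hu ↦
      Or.inl (hpos u (by rwa [uIcc_of_le (by linarith)] at hu)).ne').intervalIntegrable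
  have hplus := hint (t + ·) (by fun_prop) fun u hu ↦ by linarith [hu.1]
  have hminus := hint (t - ·) (by fun_prop) fun u hu ↦ by linarith [hu.2]
  have hshift : ∫ x in t - h..t + h, x ^ (-σ) = ∫ u in -h..h, (t + u) ^ (-σ) := by
    rw [intervalIntegral.integral_comp_add_left (fun x ↦ x ^ (-σ)), sub_eq_add_neg]
  have hsymm : ∫ x in t - h..t + h, x ^ (-σ) = ∫ u in -h..h, (t - u) ^ (-σ) := by
    rw [intervalIntegral.integral_comp_sub_left (fun x ↦ x ^ (-σ)), sub_neg_eq_add]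
  have hmono : ∫ _ in -h..h, 2 * t ^ (-σ) ≤ ∫ u in -h..h, ((t + u) ^ (-σ) + (t - u) ^ (-σ)) :=
    intervalIntegral.integral_mono_on (by linarith) intervalIntegrable_const (hplus.add hminus)
      fun u hu ↦ two_mul_rpow_neg_le_add ((abs_le.2 hu).trans_lt ht) hσ
  rw [intervalIntegral.integral_add hplus hminus, ← hshift, ← hsymm,
    intervalIntegral.integral_const, smul_eq_mul] at hmono
  linarith

theorem two_mul_mul_one_sub_mul_rpow_neg_le {t h σ : ℝ} (hh : 0 ≤ h) (ht : h < t) (hσ₀ : 0 ≤ σ)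
    (hσ₁ : σ < 1) :
    2 * h * ((1 - σ) * t ^ (-σ)) ≤ (t + h) ^ (1 - σ) - (t - h) ^ (1 - σ) := by
  have hint := integral_rpow (a := t - h) (b := t + h) (r := -σ) (Or.inl (by linarith))
  rw [neg_add_eq_sub] at hint
  have := two_mul_mul_rpow_neg_le_integral hh ht hσ₀
  rw [hint, le_div_iff₀ (by linarith)] at this
  linarith

theorem one_sub_mul_rpow_neg_lt_rpow {a σ : ℝ} (ha : 2⁻¹ ≤ a) (hσ₀ : 0 < σ) (hσ₁ : σ < 1) :
    (1 - σ) * a ^ (-σ) < (a + 2⁻¹) ^ (1 - σ) := by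
  set b := a + 2⁻¹ with hb
  have ha₀ : 0 < a := by linarith
  have hb₁ : 1 ≤ b := by linarith [hb]
  have hratio : (b / a) ^ σ ≤ 1 + σ :=
    calc (b / a) ^ σ = (1 + (2 * a)⁻¹) ^ σ := by congr 1; field_simp; ring
      _ ≤ 1 + σ * (2 * a)⁻¹ := rpow_one_add_le_one_add_mul_self
            (by linarith [inv_nonneg.2 (by linarith : 0 ≤ 2 * a)]) hσ₀.le hσ₁.le
      _ ≤ 1 + σ := by
          gcongr
          exact mul_le_of_le_one_right hσ₀.le (inv_le_one_of_one_le₀ (by linarith))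
  calc (1 - σ) * a ^ (-σ) = (1 - σ) * (b / a) ^ σ * b ^ (-σ) := by
        have hb₀ : 0 ≤ b := zero_le_one.trans hb₁
        rw [div_rpow hb₀ ha₀.le, rpow_neg ha₀.le, rpow_neg hb₀]
        field_simp
    _ ≤ (1 - σ) * (1 + σ) * b ^ (-σ) := by gcongr
    _ < 1 * b ^ (-σ) := by gcongr; nlinarith
    _ ≤ b ^ (1 - σ) := by
        rw [one_mul]; exact rpow_le_rpow_of_exponent_le hb₁ (by linarith)

end Real

theorem summable_nat_add_one_rpow {p : ℝ} (hp : p < -1) :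
    Summable fun n : ℕ ↦ ((n : ℝ) + 1) ^ p := by
  simpa using (summable_nat_add_iff 1).2 (Real.summable_nat_rpow.2 hp)

theorem hasDerivAt_ofReal_add_cpow {t u : ℝ} (h : 0 < t + u) (c : ℂ) :
    HasDerivAt (fun v : ℝ ↦ ((t : ℂ) + v) ^ c) (c * ((t : ℂ) + u) ^ (c - 1)) u := by
  have hslit : (t : ℂ) + u ∈ slitPlane := by
    rw [← ofReal_add]; exact ofReal_mem_slitPlane.2 h
  simpa using (((hasDerivAt_id (u : ℂ)).const_add (t : ℂ)).cpow_const hslit).comp_ofReal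

namespace HurwitzZeta

noncomputable def midpointError (t : ℝ) (s : ℂ) : ℂ :=
  (1 - s) * (t : ℂ) ^ (-s) - (((t : ℂ) + 2⁻¹) ^ (1 - s) - ((t : ℂ) - 2⁻¹) ^ (1 - s))

theorem norm_midpointError_le {t : ℝ} (ht : 2⁻¹ < t) {s : ℂ} (hs : -1 ≤ s.re) :
    ‖midpointError t s‖ ≤ ‖s‖ * ‖1 - s‖ * (t - 2⁻¹) ^ (-s.re - 1) / 2 := by
  have hpos : ∀ u ∈ Icc (-2⁻¹ : ℝ) 2⁻¹, 0 < t + u := fun u hu ↦ by linarith [hu.1]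
  have hf : ∀ u ∈ Icc (-2⁻¹ : ℝ) 2⁻¹, HasDerivAt (fun v : ℝ ↦ ((t : ℂ) + v) ^ (1 - s))
      ((1 - s) * ((t : ℂ) + u) ^ (-s)) u := fun u hu ↦ by
    simpa using hasDerivAt_ofReal_add_cpow (hpos u hu) (1 - s)
  have hf' : ∀ u ∈ Icc (-2⁻¹ : ℝ) 2⁻¹, HasDerivAt (fun v : ℝ ↦ (1 - s) * ((t : ℂ) + v) ^ (-s))
      ((1 - s) * (-s * ((t : ℂ) + u) ^ (-s - 1))) u := fun u hu ↦
    (hasDerivAt_ofReal_add_cpow (hpos u hu) (-s)).const_mul (1 - s)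
  have hC : ∀ u ∈ Icc (-2⁻¹ : ℝ) 2⁻¹, ‖(1 - s) * (-s * ((t : ℂ) + u) ^ (-s - 1))‖ ≤
      ‖s‖ * ‖1 - s‖ * (t - 2⁻¹) ^ (-s.re - 1) := fun u hu ↦ by
    rw [norm_mul, norm_mul, norm_neg, ← ofReal_add, norm_cpow_eq_rpow_re_of_pos (hpos u hu)]
    simp only [sub_re, neg_re, one_re]
    rw [mul_left_comm, mul_assoc]
    gcongr _ * (_ * ?_)
    exact Real.rpow_le_rpow_of_nonpos (by linarith) (by linarith [hu.1]) (by linarith)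
  have := norm_sub_sub_smul_deriv_le (by norm_num) hf hf' hC
  rw [← norm_neg]
  convert this using 1
  · rw [mul_inv_cancel₀ two_ne_zero, one_smul, midpointError]
    push_cast
    ring_nf
  · ring

theorem norm_midpointError_nat_add_le {a : ℝ} (ha : 2⁻¹ ≤ a) {s : ℂ} {ε R : ℝ} (hε : 0 ≤ ε)
    (hεs : ε ≤ s.re) (hR : ‖s‖ ≤ R) (n : ℕ) :
    ‖midpointError (n + 1 + a) s‖ ≤ R * (1 + R) * ((n : ℝ) + 1) ^ (-1 - ε) := by
  have hn : (1 : ℝ) ≤ n + 1 := by linarith [n.cast_nonneg (α := ℝ)]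
  have hshift : (n : ℝ) + 1 ≤ n + 1 + a - 2⁻¹ := by linarith
  have hR₀ : 0 ≤ R := (norm_nonneg s).trans hR
  have h1s : ‖1 - s‖ ≤ 1 + R := (norm_sub_le _ _).trans (by rw [norm_one]; linarith)
  have hbase : 0 ≤ (n + 1 + a - 2⁻¹ : ℝ) ^ (-s.re - 1) := Real.rpow_nonneg (by linarith) _
  have hdecay : (n + 1 + a - 2⁻¹ : ℝ) ^ (-s.re - 1) ≤ ((n : ℝ) + 1) ^ (-1 - ε) :=
    (Real.rpow_le_rpow_of_nonpos (by linarith) hshift (by linarith)).trans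
      (Real.rpow_le_rpow_of_exponent_le hn (by linarith))
  calc ‖midpointError (n + 1 + a) s‖
      ≤ ‖s‖ * ‖1 - s‖ * (n + 1 + a - 2⁻¹) ^ (-s.re - 1) / 2 :=
        norm_midpointError_le (by linarith) (by linarith)
    _ ≤ ‖s‖ * ‖1 - s‖ * (n + 1 + a - 2⁻¹) ^ (-s.re - 1) := half_le_self (by positivity)
    _ ≤ R * (1 + R) * ((n : ℝ) + 1) ^ (-1 - ε) :=
        mul_le_mul (mul_le_mul hR h1s (norm_nonneg _) hR₀) hdecay hbase
          (mul_nonneg hR₀ (by linarith))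

theorem summable_midpointError {a : ℝ} (ha : 2⁻¹ ≤ a) {s : ℂ} (hs : 0 < s.re) :
    Summable fun n : ℕ ↦ midpointError (n + 1 + a) s :=
  .of_norm_bounded ((summable_nat_add_one_rpow (by linarith)).mul_left _)
    (norm_midpointError_nat_add_le ha hs.le le_rfl le_rfl)

theorem differentiable_midpointError {t : ℝ} (ht : 2⁻¹ < t) :
    Differentiable ℂ (midpointError t) := by
  have ht₀ : (t : ℂ) ≠ 0 := ofReal_ne_zero.2 (by linarith)
  have htp : (t : ℂ) + 2⁻¹ ≠ 0 := ne_of_apply_ne re (by norm_num; linarith)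
  have htm : (t : ℂ) - 2⁻¹ ≠ 0 := ne_of_apply_ne re (by norm_num; linarith)
  unfold midpointError
  fun_prop (disch := simp [ht₀, htp, htm])

noncomputable def midpointContinuation (a : ℝ) (s : ℂ) : ℂ :=
  (1 - s) * (a : ℂ) ^ (-s) - ((a : ℂ) + 2⁻¹) ^ (1 - s) + ∑' n : ℕ, midpointError (n + 1 + a) s

theorem differentiableOn_midpointContinuation {a : ℝ} (ha : 2⁻¹ ≤ a) :
    DifferentiableOn ℂ (midpointContinuation a) {s | 0 < s.re} := by
  have ha₀ : (a : ℂ) ≠ 0 := ofReal_ne_zero.2 (by linarith)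
  have ha₁ : (a : ℂ) + 2⁻¹ ≠ 0 := ne_of_apply_ne re (by norm_num; linarith)
  have hhead :
      Differentiable ℂ fun s : ℂ ↦ (1 - s) * (a : ℂ) ^ (-s) - ((a : ℂ) + 2⁻¹) ^ (1 - s) := by
    fun_prop (disch := simp [ha₀, ha₁])
  have hopen : ∀ ε R : ℝ, IsOpen {s : ℂ | ε < s.re ∧ ‖s‖ < R} := fun ε R ↦
    (isOpen_lt continuous_const continuous_re).inter (isOpen_lt continuous_norm continuous_const)
  have htail : ∀ ε R : ℝ, 0 < ε → DifferentiableOn ℂ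
      (fun s ↦ ∑' n : ℕ, midpointError (n + 1 + a) s) {s | ε < s.re ∧ ‖s‖ < R} :=
    fun ε R hε ↦ differentiableOn_tsum_of_summable_norm
      ((summable_nat_add_one_rpow (by linarith)).mul_left _)
      (fun n ↦ (differentiable_midpointError
        (by linarith [n.cast_nonneg (α := ℝ)])).differentiableOn) (hopen ε R)
      fun n s hs ↦ norm_midpointError_nat_add_le ha hε.le hs.1.le hs.2.le n
  intro s hs
  have hmem : s ∈ {w : ℂ | s.re / 2 < w.re ∧ ‖w‖ < ‖s‖ + 1} :=
    ⟨by linarith [show 0 < s.re from hs], by linarith⟩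
  exact ((hhead s).add ((htail _ _ (half_pos hs)).differentiableAt
    ((hopen _ _).mem_nhds hmem))).differentiableWithinAt

theorem midpointContinuation_eq_of_one_lt_re {a : ℝ} (ha : 2⁻¹ ≤ a) (ha₁ : a ≤ 1) {s : ℂ}
    (hs : 1 < s.re) : midpointContinuation a s = (1 - s) * hurwitzZeta a s := by
  set F : ℕ → ℂ := fun n ↦ ((n + a + 2⁻¹ : ℝ) : ℂ) ^ (1 - s) with hF
  have hζ : HasSum (fun n : ℕ ↦ ((n + 1 + a : ℝ) : ℂ) ^ (-s))
      (hurwitzZeta a s - (a : ℂ) ^ (-s)) := by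
    have := (hasSum_nat_add_iff' 1).2 (hasSum_hurwitzZeta_of_one_lt_re ⟨by linarith, ha₁⟩ hs)
    simpa [cpow_neg] using this
  have hdiff : ∀ n : ℕ, F (n + 1) - F n =
      (1 - s) * ((n + 1 + a : ℝ) : ℂ) ^ (-s) - midpointError (n + 1 + a) s := fun n ↦ by
    simp only [hF, midpointError]; push_cast; ring_nf
  have hlim : Tendsto F atTop (𝓝 0) := by
    rw [tendsto_zero_iff_norm_tendsto_zero]
    have hnorm : ∀ n : ℕ, ‖F n‖ = ((n : ℝ) + a + 2⁻¹) ^ (-(s.re - 1)) := fun n ↦ by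
      rw [hF, norm_cpow_eq_rpow_re_of_pos (by positivity)]; simp
    simp only [hnorm]
    exact (tendsto_rpow_neg_atTop (by linarith)).comp <| tendsto_atTop_add_const_right _ _ <|
      tendsto_atTop_add_const_right _ _ tendsto_natCast_atTop_atTop
  have htelescope := hasSum_sub_of_tendsto
    (((hζ.summable.mul_left _).sub (summable_midpointError ha (by linarith))).congr
      fun n ↦ (hdiff n).symm) hlim
  have htail : HasSum (fun n : ℕ ↦ midpointError (n + 1 + a) s)
      ((1 - s) * (hurwitzZeta a s - (a : ℂ) ^ (-s)) - (0 - F 0)) :=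
    ((hζ.mul_left (1 - s)).sub htelescope).congr_fun fun n ↦ by rw [hdiff]; ring
  rw [midpointContinuation, htail.tsum_eq, hF]
  push_cast
  ring_nf

theorem midpointContinuation_eq_of_re_lt_one {a : ℝ} (ha : 2⁻¹ ≤ a) (ha₁ : a ≤ 1) {s : ℂ}
    (hs₀ : 0 < s.re) (hs₁ : s.re < 1) : midpointContinuation a s = (1 - s) * hurwitzZeta a s := by
  -- `Ω` avoids the pole at `1`, yet is connected and reaches the half-plane `Re s > 1`.
  set Ω : Set ℂ := {w | 0 < w.re ∧ w.re < 1} ∪ {w | 0 < w.re ∧ 0 < w.im}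
  have hΩ_open : IsOpen Ω :=
    ((isOpen_lt continuous_const continuous_re).inter
      (isOpen_lt continuous_re continuous_const)).union
      ((isOpen_lt continuous_const continuous_re).inter (isOpen_lt continuous_const continuous_im))
  have hΩ_conn : IsPreconnected Ω :=
    ((convex_halfSpace_re_gt 0).inter (convex_halfSpace_re_lt 1)).isPreconnected.union (2⁻¹ + I)
      ⟨by norm_num, by norm_num⟩ ⟨by norm_num, by simp⟩
      ((convex_halfSpace_re_gt 0).inter (convex_halfSpace_im_gt 0)).isPreconnected
  have hΩ_re : ∀ w ∈ Ω, 0 < w.re := fun w hw ↦ hw.elim And.left And.left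
  have hΩ_one : ∀ w ∈ Ω, w ≠ 1 := by rintro w hw rfl; simp [Ω] at hw
  have hcont : AnalyticOnNhd ℂ (midpointContinuation a) Ω :=
    ((differentiableOn_midpointContinuation ha).mono hΩ_re).analyticOnNhd hΩ_open
  have hzeta : AnalyticOnNhd ℂ (fun w ↦ (1 - w) * hurwitzZeta a w) Ω :=
    DifferentiableOn.analyticOnNhd (fun w hw ↦ ((differentiableAt_id.const_sub 1).mul
      (differentiableAt_hurwitzZeta _ (hΩ_one w hw))).differentiableWithinAt) hΩ_open
  have hnear : midpointContinuation a =ᶠ[𝓝 (2 + I)] fun w ↦ (1 - w) * hurwitzZeta a w := by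
    filter_upwards [(isOpen_lt continuous_const continuous_re).mem_nhds
      (show (1 : ℝ) < (2 + I).re by simp)] with w hw
    exact midpointContinuation_eq_of_one_lt_re ha ha₁ hw
  exact hcont.eqOn_of_preconnected_of_eventuallyEq hzeta hΩ_conn (Or.inr ⟨by simp, by simp⟩) hnear
    (Or.inl ⟨hs₀, hs₁⟩)

theorem midpointError_ofReal {t : ℝ} (ht : 2⁻¹ ≤ t) (σ : ℝ) :
    midpointError t σ = ((1 - σ) * t ^ (-σ) - ((t + 2⁻¹) ^ (1 - σ) - (t - 2⁻¹) ^ (1 - σ)) : ℝ) := by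
  push_cast [ofReal_cpow (by linarith : 0 ≤ t), ofReal_cpow (by linarith : 0 ≤ t + 2⁻¹),
    ofReal_cpow (by linarith : 0 ≤ t - 2⁻¹)]
  rfl

theorem exists_neg_midpointContinuation_eq {a σ : ℝ} (ha : 2⁻¹ ≤ a) (hσ₀ : 0 < σ) (hσ₁ : σ < 1) :
    ∃ r : ℝ, r < 0 ∧ midpointContinuation a σ = r := by
  set v : ℕ → ℝ := fun n ↦ (1 - σ) * ((n : ℝ) + 1 + a) ^ (-σ) -
    (((n : ℝ) + 1 + a + 2⁻¹) ^ (1 - σ) - ((n : ℝ) + 1 + a - 2⁻¹) ^ (1 - σ)) with hv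
  have hv_nonpos : ∑' n, v n ≤ 0 := tsum_nonpos fun n ↦ by
    have := Real.two_mul_mul_one_sub_mul_rpow_neg_le (t := n + 1 + a) (h := 2⁻¹) (by norm_num)
      (by linarith [n.cast_nonneg (α := ℝ)]) hσ₀.le hσ₁
    rw [mul_inv_cancel₀ two_ne_zero, one_mul] at this
    rw [hv]
    linarith
  have hhead : (((1 - σ) * a ^ (-σ) - (a + 2⁻¹) ^ (1 - σ) : ℝ) : ℂ) =
      (1 - σ) * (a : ℂ) ^ (-(σ : ℂ)) - ((a : ℂ) + 2⁻¹) ^ (1 - (σ : ℂ)) := by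
    push_cast [ofReal_cpow (by linarith : 0 ≤ a), ofReal_cpow (by linarith : 0 ≤ a + 2⁻¹)]
    rfl
  have htail : ((∑' n, v n : ℝ) : ℂ) = ∑' n : ℕ, midpointError (n + 1 + a) σ := by
    rw [ofReal_tsum]
    exact tsum_congr fun n ↦ (midpointError_ofReal (by linarith [n.cast_nonneg (α := ℝ)]) σ).symm
  refine ⟨(1 - σ) * a ^ (-σ) - (a + 2⁻¹) ^ (1 - σ) + ∑' n, v n,
    by linarith [Real.one_sub_mul_rpow_neg_lt_rpow ha hσ₀ hσ₁], ?_⟩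
  rw [midpointContinuation, ofReal_add, hhead, htail]

end HurwitzZeta

/-- If 1/2 ≤ a ≤ 1, then the Hurwitz zeta value ζ(σ,a) is real and
negative for every 0 < σ < 1. -/
theorem hurwitzZeta_neg (a σ : ℝ) (ha : 1 / 2 ≤ a) (ha1 : a ≤ 1)
    (hσ0 : 0 < σ) (hσ1 : σ < 1) :
    ∃ r : ℝ, r < 0 ∧ HurwitzZeta.hurwitzZeta (a : UnitAddCircle) (σ : ℂ) = (r : ℂ) := by
  rw [one_div] at ha
  obtain ⟨r, hr, hcont⟩ := exists_neg_midpointContinuation_eq ha hσ0 hσ1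
  have hζ := midpointContinuation_eq_of_re_lt_one ha ha1 (s := σ) (by simpa) (by simpa)
  have hσ : (1 - σ : ℂ) ≠ 0 := by exact_mod_cast (sub_pos.2 hσ1).ne'
  refine ⟨r / (1 - σ), div_neg_of_neg_of_pos hr (sub_pos.2 hσ1), ?_⟩
  rw [hcont] at hζ
  push_cast
  field_simp
  linear_combination -hζ
end

section
/- For σ > 1, 0 < a ≤ 1, z ∈ (0,1], and all real t, the Fourier transform identity ∫_ℝ e^{ity} · e^{σy} exp((1−a)e^y)/(exp(e^y)−z) dy = Γ(σ+it)Φ(σ+it,a,z) holds. -/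
open MeasureTheory Set

/-!
For `x > 0` the kernel is a geometric series of exponentials,
`exp ((1 - a) x) / (exp x - z) = ∑ zⁿ exp (-(n + a) x)`, and the Mellin transform of
`exp (-(n + a) x)` is `Γ(s) (n + a)⁻ˢ`. Since `|z| ≤ 1` and `Re s > 1` the series of absolute
values converges, so termwise integration gives `Γ(s) Φ(s, a, z)`. The substitution `x = exp y`
turns the Mellin integral into the integral over `ℝ`, whose integrand splits as
`exp (i t y) · exp (σ y) · (kernel at exp y)` for `s = σ + i t`.
-/

noncomputable def lerchPhi (s : ℂ) (a : ℝ) (z : ℂ) : ℂ :=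
  ∑' n : ℕ, z ^ n / ((n : ℂ) + a) ^ s

lemma hasSum_pow_mul_exp_neg_nat_add_mul (a : ℝ) {z x : ℝ} (hz : |z| < Real.exp x) :
    HasSum (fun n : ℕ => z ^ n * Real.exp (-(n + a) * x))
      (Real.exp ((1 - a) * x) / (Real.exp x - z)) := by
  have hr : |z * Real.exp (-x)| < 1 := by
    rw [abs_mul, abs_of_pos (Real.exp_pos _), Real.exp_neg, ← div_eq_mul_inv]
    exact (div_lt_one (Real.exp_pos x)).mpr hz
  have hden : Real.exp x - z ≠ 0 := by
    have := le_abs_self z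
    linarith
  have hterm : (fun n : ℕ => z ^ n * Real.exp (-(n + a) * x))
      = fun n : ℕ => Real.exp (-(a * x)) * (z * Real.exp (-x)) ^ n := by
    funext n
    rw [mul_pow, ← Real.exp_nat_mul, show -((n : ℝ) + a) * x = n * -x + -(a * x) by ring,
      Real.exp_add]
    ring
  have hval : Real.exp ((1 - a) * x) / (Real.exp x - z)
      = Real.exp (-(a * x)) * (1 - z * Real.exp (-x))⁻¹ := by
    rw [show (1 - a) * x = x + -(a * x) by ring, Real.exp_add, Real.exp_neg x]
    field_simp
  rw [hterm, hval]
  exact (hasSum_geometric_of_abs_lt_one hr).mul_left _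

lemma summable_norm_pow_div_nat_add_rpow {z : ℂ} (hz : ‖z‖ ≤ 1) {a σ : ℝ} (ha : 0 < a)
    (hσ : 1 < σ) : Summable fun n : ℕ => ‖z ^ n‖ / ((n : ℝ) + a) ^ σ := by
  refine ((Real.summable_one_div_nat_add_rpow a σ).mpr hσ).of_nonneg_of_le
    (fun n => by positivity) fun n => ?_
  rw [abs_of_pos (by positivity : (0 : ℝ) < n + a), norm_pow]
  gcongr
  exact pow_le_one₀ (norm_nonneg z) hz

lemma mellin_eq_integral_cexp_mul {E : Type*} [NormedAddCommGroup E] [NormedSpace ℂ E]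
    (f : ℝ → E) (s : ℂ) :
    mellin f s = ∫ y : ℝ, Complex.exp (s * y) • f (Real.exp y) := by
  rw [mellin, ← Real.range_exp, ← image_univ,
    integral_image_eq_integral_abs_deriv_smul MeasurableSet.univ
      (fun x _ => (Real.hasDerivAt_exp x).hasDerivWithinAt) Real.exp_injective.injOn,
    setIntegral_univ]
  congr 1 with y
  rw [abs_of_pos (Real.exp_pos y), ← Complex.coe_smul, smul_smul, Complex.ofReal_exp,
    Complex.cpow_def_of_ne_zero (Complex.exp_ne_zero _), Complex.log_exp (by simpa using Real.pi_pos) (by simp [Real.pi_nonneg]),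
    ← Complex.exp_add]
  ring_nf

theorem mellin_exp_div_exp_sub_eq_Gamma_mul_lerchPhi {s : ℂ} (hs : 1 < s.re) {a z : ℝ}
    (ha : 0 < a) (hz : |z| ≤ 1) :
    mellin (fun x : ℝ => ((Real.exp ((1 - a) * x) / (Real.exp x - z) : ℝ) : ℂ)) s
      = Complex.Gamma s * lerchPhi s a z := by
  have hseries : ∀ x ∈ Ioi (0 : ℝ), HasSum (fun n : ℕ => (z : ℂ) ^ n * Real.exp (-(n + a) * x))
      ((Real.exp ((1 - a) * x) / (Real.exp x - z) : ℝ) : ℂ) := fun x hx => by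
    have := (hasSum_pow_mul_exp_neg_nat_add_mul a
      (hz.trans_lt (Real.one_lt_exp_iff.mpr hx))).map Complex.ofRealCLM Complex.continuous_ofReal
    simpa only [Function.comp_def, Complex.ofRealCLM_apply, Complex.ofReal_mul,
      Complex.ofReal_pow] using this
  have hsum := hasSum_mellin (fun n => Or.inr (by positivity)) (by linarith) hseries
    (summable_norm_pow_div_nat_add_rpow (by simpa using hz) ha hs)
  rw [← hsum.tsum_eq, lerchPhi, ← tsum_mul_left]
  congr 1 with n
  push_cast
  ring

theorem lerch_fourier_general (σ a z t : ℝ) (hσ : 1 < σ) (ha : 0 < a)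
    (hz0 : 0 < z) (hz1 : z ≤ 1) :
    (∫ y : ℝ, Complex.exp (Complex.I * t * y)
        * ((Real.exp (σ * y) * Real.exp ((1 - a) * Real.exp y)
            / (Real.exp (Real.exp y) - z) : ℝ) : ℂ))
      = Complex.Gamma (σ + t * Complex.I)
        * ∑' n : ℕ, (z : ℂ) ^ n / ((n : ℂ) + a) ^ ((σ : ℂ) + t * Complex.I) := by
  have hs : 1 < ((σ : ℂ) + t * Complex.I).re := by simpa using hσ
  rw [← lerchPhi, ← mellin_exp_div_exp_sub_eq_Gamma_mul_lerchPhi hs ha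
    (abs_le.mpr ⟨by linarith, hz1⟩), mellin_eq_integral_cexp_mul]
  congr 1 with y
  have hexp : Complex.exp ((σ + t * Complex.I) * y)
      = Complex.exp (Complex.I * t * y) * Real.exp (σ * y) := by
    rw [Complex.ofReal_exp, ← Complex.exp_add]
    push_cast
    ring_nf
  rw [smul_eq_mul, hexp]
  push_cast
  ring

/-- For σ > 1, 0 < a ≤ 1, z ∈ (0,1], and all real t,
∫_ℝ e^{ity} e^{σy} exp((1−a)e^y)/(exp(e^y)−z) dy = Γ(σ+it)Φ(σ+it,a,z). -/
theorem lerch_fourier (σ a z t : ℝ) (hσ : 1 < σ) (ha : 0 < a) (ha1 : a ≤ 1)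
    (hz0 : 0 < z) (hz1 : z ≤ 1) :
    (∫ y : ℝ, Complex.exp (Complex.I * t * y)
        * ((Real.exp (σ * y) * Real.exp ((1 - a) * Real.exp y)
            / (Real.exp (Real.exp y) - z) : ℝ) : ℂ))
      = Complex.Gamma (σ + t * Complex.I)
        * ∑' n : ℕ, (z : ℂ) ^ n / ((n : ℂ) + a) ^ ((σ : ℂ) + t * Complex.I) :=
  lerch_fourier_general σ a z t hσ ha hz0 hz1
end

section
/- For real s₁ > 1, s₂ > 1, 0 < a ≤ 1, and z₁, z₂ ∈ [-1,1], Γ(s₁)Γ(s₂)·Φ₂(s₁,s₂,a,z₁,z₂) = ∫_0^∞ (y^{s₂-1}/(e^y − z₂)) ∫_0^∞ (x^{s₁-1} e^{(1-a)(x+y)}/(e^{x+y} − z₁)) dx dy. -/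
/-!
For `t > 0` and `|z| ≤ 1` the kernel `e^{(1-a)t} / (e^t - z)` is the geometric series
`∑ₘ zᵐ e^{-(m+a)t}`. Integrating termwise against `x^{s-1}` turns each exponential into
`Γ(s) / (m+a)^s`. Doing this in `x` for fixed `y` produces the terms `zᵐ e^{-(m+a)y}`; the
same expansion then evaluates the `y`-integral of each term. Both interchanges of sum and
integral are justified by absolute convergence: the coefficients are bounded by `1`, and
`∑ (m+a)^{-s}` converges for `s > 1`.
-/

open MeasureTheory Set Real

theorem hasSum_pow_mul_exp_neg_mul {z t : ℝ} (hz : |z| ≤ 1) (ht : 0 < t) (a : ℝ) :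
    HasSum (fun m : ℕ => z ^ m * exp (-((m + a) * t))) (exp ((1 - a) * t) / (exp t - z)) := by
  have hr : ‖z * exp (-t)‖ < 1 := by
    rw [norm_mul, norm_eq_abs, norm_of_nonneg (exp_pos _).le]
    calc |z| * exp (-t) ≤ 1 * exp (-t) := by gcongr
      _ < 1 := by rw [one_mul, exp_lt_one_iff]; linarith
  have hden : 0 < exp t - z := by linarith [add_one_le_exp t, (abs_le.1 hz).2]
  have hterm : (fun m : ℕ => z ^ m * exp (-((m + a) * t)))
      = fun m => (z * exp (-t)) ^ m * exp (-(a * t)) := by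
    funext m
    rw [mul_pow, ← exp_nat_mul, mul_assoc, ← exp_add]
    ring_nf
  have hsum : exp ((1 - a) * t) / (exp t - z) = (1 - z * exp (-t))⁻¹ * exp (-(a * t)) := by
    rw [show 1 - z * exp (-t) = (exp t - z) * exp (-t) by rw [sub_mul, ← exp_add]; simp]
    field_simp
    rw [← exp_add]
    ring_nf
  rw [hterm, hsum]
  exact (hasSum_geometric_of_norm_lt_one hr).mul_right _

theorem summable_abs_div_nat_add_rpow {c : ℕ → ℝ} (hc : ∀ n, |c n| ≤ 1) {β s : ℝ}
    (hβ : 0 < β) (hs : 1 < s) : Summable fun n : ℕ => |c n| / ((n : ℝ) + β) ^ s := by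
  refine ((Real.summable_one_div_nat_add_rpow β s).2 hs).of_nonneg_of_le
    (fun n => div_nonneg (abs_nonneg _) (rpow_nonneg (by positivity) _)) fun n => ?_
  rw [abs_of_pos (show 0 < (n : ℝ) + β by positivity)]
  gcongr
  exact hc n

theorem MeasureTheory.integral_tsum_of_norm_le_mul {α E : Type*} [MeasurableSpace α]
    {μ : Measure α} [NormedAddCommGroup E] [NormedSpace ℝ E] {ι : Type*} [Countable ι]
    {F : ι → α → E} {C : ι → ℝ} {g : α → ℝ}
    (hF : ∀ i, AEStronglyMeasurable (F i) μ) (hg : Integrable g μ) (hC : Summable C)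
    (hle : ∀ i, ∀ᵐ x ∂μ, ‖F i x‖ ≤ C i * g x) :
    ∫ x, ∑' i, F i x ∂μ = ∑' i, ∫ x, F i x ∂μ := by
  have hFi : ∀ i, Integrable (F i) μ := fun i => (hg.const_mul (C i)).mono' (hF i) (hle i)
  refine (integral_tsum_of_summable_integral_norm hFi ?_).symm
  refine (hC.mul_right (∫ x, g x ∂μ)).of_nonneg_of_le
    (fun i => integral_nonneg fun _ => norm_nonneg _) fun i => ?_
  calc ∫ x, ‖F i x‖ ∂μ ≤ ∫ x, C i * g x ∂μ := integral_mono_ae (hFi i).norm (hg.const_mul _) (hle i)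
    _ = C i * ∫ x, g x ∂μ := integral_const_mul _ _

theorem integrableOn_rpow_mul_exp_neg_mul {s b : ℝ} (hs : -1 < s) (hb : 0 < b) :
    IntegrableOn (fun x : ℝ => x ^ s * exp (-(b * x))) (Ioi 0) :=
  (integrableOn_rpow_mul_exp_neg_mul_rpow hs one_pos hb).congr_fun
    (fun x _ => by simp only [rpow_one, neg_mul]) measurableSet_Ioi

theorem integral_rpow_mul_tsum_mul_exp_neg_mul_Ioi {s : ℝ} (hs : 0 < s) {c b : ℕ → ℝ}
    (hb : ∀ n, 0 < b n) (hc : Summable fun n => |c n| / b n ^ s) :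
    ∫ x in Ioi (0:ℝ), x ^ (s - 1) * ∑' n, c n * exp (-(b n * x))
      = Gamma s * ∑' n, c n / b n ^ s := by
  have hint : ∀ n, ∫ x in Ioi (0:ℝ), x ^ (s - 1) * exp (-(b n * x)) = Gamma s / b n ^ s := by
    intro n
    rw [integral_rpow_mul_exp_neg_mul_Ioi hs (hb n), div_rpow zero_le_one (hb n).le, one_rpow]
    ring
  have hF : ∀ n, Integrable (fun x => c n * (x ^ (s - 1) * exp (-(b n * x))))
      (volume.restrict (Ioi 0)) := fun n =>
    (integrableOn_rpow_mul_exp_neg_mul (by linarith) (hb n)).const_mul _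
  have hnorm : ∀ n, ∫ x in Ioi (0:ℝ), ‖c n * (x ^ (s - 1) * exp (-(b n * x)))‖
      = Gamma s * (|c n| / b n ^ s) := by
    intro n
    rw [← mul_div_assoc, mul_comm, mul_div_assoc, ← hint n, ← integral_const_mul]
    refine setIntegral_congr_fun measurableSet_Ioi fun x (hx : 0 < x) => ?_
    rw [norm_mul, norm_eq_abs, norm_of_nonneg (by positivity)]
  rw [setIntegral_congr_fun measurableSet_Ioi
      (g := fun x => ∑' n, c n * (x ^ (s - 1) * exp (-(b n * x)))) fun x _ => by
      simp only [← tsum_mul_left, mul_left_comm _ (c _)],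
    ← integral_tsum_of_summable_integral_norm hF (by simpa only [hnorm] using hc.mul_left _),
    ← tsum_mul_left]
  refine tsum_congr fun n => ?_
  rw [integral_const_mul, hint]
  ring

theorem integral_rpow_mul_exp_div_exp_sub_Ioi {s a z y : ℝ} (hs : 1 < s) (ha : 0 < a)
    (hz : |z| ≤ 1) (hy : 0 ≤ y) :
    ∫ x in Ioi (0:ℝ), x ^ (s - 1) * exp ((1 - a) * (x + y)) / (exp (x + y) - z)
      = Gamma s * ∑' m : ℕ, z ^ m * exp (-((m + a) * y)) / ((m : ℝ) + a) ^ s := by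
  have hcoef : ∀ m : ℕ, |z ^ m * exp (-((m + a) * y))| ≤ 1 := fun m => by
    rw [abs_mul, abs_pow, abs_of_pos (exp_pos _)]
    exact mul_le_one₀ (pow_le_one₀ (abs_nonneg z) hz) (exp_pos _).le
      (exp_le_one_iff.2 (by nlinarith))
  rw [← integral_rpow_mul_tsum_mul_exp_neg_mul_Ioi (by linarith)
    (fun m => (by positivity : 0 < (m : ℝ) + a)) (summable_abs_div_nat_add_rpow hcoef ha hs)]
  refine setIntegral_congr_fun measurableSet_Ioi fun x (hx : 0 < x) => ?_
  rw [mul_div_assoc, ← (hasSum_pow_mul_exp_neg_mul hz (by linarith) a).tsum_eq]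
  congr 1
  refine tsum_congr fun m => ?_
  rw [mul_assoc, ← exp_add]
  ring_nf

theorem integral_rpow_mul_exp_neg_mul_div_exp_sub_Ioi {s b z : ℝ} (hs : 1 < s) (hb : 0 < b)
    (hz : |z| ≤ 1) :
    ∫ y in Ioi (0:ℝ), y ^ (s - 1) * exp (-(b * y)) / (exp y - z)
      = Gamma s * ∑' n : ℕ, z ^ n / ((n : ℝ) + 1 + b) ^ s := by
  convert integral_rpow_mul_exp_div_exp_sub_Ioi hs (a := 1 + b) (by positivity) hz le_rfl
    using 3 with y n
  · ring_nf
  · simp [add_assoc]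

theorem norm_rpow_mul_exp_neg_mul_div_exp_sub_le {s a b z y : ℝ} (hab : a ≤ b) (hz : z ≤ 1)
    (hy : 0 < y) :
    ‖y ^ (s - 1) * exp (-(b * y)) / (exp y - z)‖ ≤ y ^ (s - 2) * exp (-(a * y)) := by
  have hden : y ≤ exp y - z := by linarith [add_one_le_exp y]
  calc ‖y ^ (s - 1) * exp (-(b * y)) / (exp y - z)‖
      = y ^ (s - 1) * exp (-(b * y)) / (exp y - z) :=
        norm_of_nonneg (div_nonneg (by positivity) (hy.trans_le hden).le)
    _ ≤ y ^ (s - 1) * exp (-(a * y)) / y := by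
        gcongr
    _ = y ^ (s - 2) * exp (-(a * y)) := by
        rw [show s - 2 = (s - 1) - 1 by ring, rpow_sub_one hy.ne' (s - 1)]
        ring

theorem gamma_mul_doubleLerch_eq_integral_general (s₁ s₂ a z₁ z₂ : ℝ)
    (hs₁ : 1 < s₁) (hs₂ : 1 < s₂) (ha : 0 < a)
    (hz₁ : -1 ≤ z₁) (hz₁' : z₁ ≤ 1) (hz₂ : -1 ≤ z₂) (hz₂' : z₂ ≤ 1) :
    Real.Gamma s₁ * Real.Gamma s₂
        * ∑' m : ℕ, (z₁ ^ m / ((m : ℝ) + a) ^ s₁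
            * ∑' n : ℕ, z₂ ^ n / ((m : ℝ) + (n + 1) + a) ^ s₂)
      = ∫ y in Ioi (0 : ℝ), (y ^ (s₂ - 1) / (Real.exp y - z₂))
          * ∫ x in Ioi (0 : ℝ),
              x ^ (s₁ - 1) * Real.exp ((1 - a) * (x + y)) / (Real.exp (x + y) - z₁) := by
  have hz₁a : |z₁| ≤ 1 := abs_le.2 ⟨hz₁, hz₁'⟩
  have hz₂a : |z₂| ≤ 1 := abs_le.2 ⟨hz₂, hz₂'⟩
  set G : ℕ → ℝ → ℝ := fun m y => z₁ ^ m / ((m : ℝ) + a) ^ s₁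
    * (y ^ (s₂ - 1) * exp (-((m + a) * y)) / (exp y - z₂))
  have hG : ∀ y ∈ Ioi (0 : ℝ), y ^ (s₂ - 1) / (exp y - z₂) * ∫ x in Ioi (0 : ℝ),
      x ^ (s₁ - 1) * exp ((1 - a) * (x + y)) / (exp (x + y) - z₁) = Gamma s₁ * ∑' m, G m y := by
    intro y (hy : 0 < y)
    rw [integral_rpow_mul_exp_div_exp_sub_Ioi hs₁ ha hz₁a hy.le, ← tsum_mul_left, ← tsum_mul_left,
      ← tsum_mul_left]
    exact tsum_congr fun m => by ring
  have hGle : ∀ m, ∀ᵐ y ∂volume.restrict (Ioi (0 : ℝ)),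
      ‖G m y‖ ≤ 1 / ((m : ℝ) + a) ^ s₁ * (y ^ (s₂ - 2) * exp (-(a * y))) := by
    intro m
    refine (ae_restrict_iff' measurableSet_Ioi).2 (.of_forall fun y (hy : 0 < y) => ?_)
    rw [norm_mul, norm_div, norm_pow, norm_of_nonneg (rpow_nonneg (by positivity) _)]
    gcongr
    · exact pow_le_one₀ (norm_nonneg _) (by rwa [norm_eq_abs])
    · exact norm_rpow_mul_exp_neg_mul_div_exp_sub_le (by simp) hz₂' hy
  have hC : Summable fun m : ℕ => 1 / ((m : ℝ) + a) ^ s₁ :=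
    ((summable_one_div_nat_add_rpow a s₁).2 hs₁).congr fun m => by
      rw [abs_of_pos (by positivity)]
  rw [setIntegral_congr_fun measurableSet_Ioi hG, integral_const_mul, integral_tsum_of_norm_le_mul
    (fun m => by fun_prop) (integrableOn_rpow_mul_exp_neg_mul (by linarith) ha) hC hGle,
    mul_assoc, ← tsum_mul_left]
  congr 1
  refine tsum_congr fun m => ?_
  rw [integral_const_mul, integral_rpow_mul_exp_neg_mul_div_exp_sub_Ioi hs₂ (by positivity) hz₂a]
  simp_rw [show ∀ n : ℕ, (m : ℝ) + (n + 1) + a = n + 1 + (m + a) from fun n => by ring]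
  ring

/-- For real s₁ > 1, s₂ > 1, 0 < a ≤ 1, z₁, z₂ ∈ [-1,1],
Γ(s₁)Γ(s₂)Φ₂(s₁,s₂,a,z₁,z₂)
  = ∫_0^∞ (y^{s₂-1}/(e^y−z₂)) ∫_0^∞ x^{s₁-1}e^{(1-a)(x+y)}/(e^{x+y}−z₁) dx dy,
where Φ₂(s₁,s₂,a,z₁,z₂) = ∑_{m≥0} z₁^m/(m+a)^{s₁} ∑_{n≥1} z₂^{n-1}/(m+n+a)^{s₂}. -/
theorem gamma_mul_doubleLerch_eq_integral (s₁ s₂ a z₁ z₂ : ℝ)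
    (hs₁ : 1 < s₁) (hs₂ : 1 < s₂) (ha : 0 < a) (ha1 : a ≤ 1)
    (hz₁ : -1 ≤ z₁) (hz₁' : z₁ ≤ 1) (hz₂ : -1 ≤ z₂) (hz₂' : z₂ ≤ 1) :
    Real.Gamma s₁ * Real.Gamma s₂
        * ∑' m : ℕ, (z₁ ^ m / ((m : ℝ) + a) ^ s₁
            * ∑' n : ℕ, z₂ ^ n / ((m : ℝ) + (n + 1) + a) ^ s₂)
      = ∫ y in Ioi (0 : ℝ), (y ^ (s₂ - 1) / (Real.exp y - z₂))
          * ∫ x in Ioi (0 : ℝ),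
              x ^ (s₁ - 1) * Real.exp ((1 - a) * (x + y)) / (Real.exp (x + y) - z₁) :=
  gamma_mul_doubleLerch_eq_integral_general s₁ s₂ a z₁ z₂ hs₁ hs₂ ha hz₁ hz₁' hz₂ hz₂'
end

section
/- Define ℋ(a; x, y) = H(a, x+y)/(e^y − 1) + H(1, y)/(x + y) for x, y > 0, where H(a,x) = e^{(1-a)x}/(e^x − 1) − 1/x. Then ℋ(a; x, y) < 0 for all x, y > 0 if and only if a ≥ 1/2 (for 0 < a ≤ 1). -/
/-!
For `a ≥ 1/2` both summands of `ℋ` are negative, because `H(a, s) < 0` for `s > 0`: indeed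
`e^{(1-a)s} ≤ e^{s/2} < (e^s - 1)/s`, the last step being `sinh (s/2) > s/2`.

For `a < 1/2` the Taylor expansion `s e^{(1-a)s} - (e^s - 1) = (1/2 - a) s² + O(s³)` gives some
`s > 0` with `H(a, s) > 0`. Keeping `x + y = s` and letting `y → 0`, the first summand
`H(a, s)/(e^y - 1)` blows up while `H(1, y)` stays bounded, so `ℋ(a; s - y, y) > 0`.
-/

open Real

namespace CalH

noncomputable def H (a s : ℝ) : ℝ := exp ((1 - a) * s) / (exp s - 1) - 1 / s

noncomputable def calH (a x y : ℝ) : ℝ := H a (x + y) / (exp y - 1) + H 1 y / (x + y)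

lemma exp_sub_one_pos {s : ℝ} (hs : 0 < s) : 0 < exp s - 1 :=
  sub_pos.2 (one_lt_exp_iff.2 hs)

lemma mul_exp_half_lt_exp_sub_one {s : ℝ} (hs : 0 < s) : s * exp (s / 2) < exp s - 1 := by
  have hsinh : s / 2 < sinh (s / 2) := self_lt_sinh_iff.2 (by linarith)
  have hsplit : exp s - 1 = 2 * sinh (s / 2) * exp (s / 2) := by
    rw [sinh_eq, mul_div_cancel₀ _ two_ne_zero, sub_mul, ← exp_add, ← exp_add]
    norm_num
  rw [hsplit]
  nlinarith [exp_pos (s / 2)]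

lemma H_neg {a s : ℝ} (ha : 1 / 2 ≤ a) (hs : 0 < s) : H a s < 0 := by
  have hle : exp ((1 - a) * s) ≤ exp (s / 2) := exp_le_exp.2 (by nlinarith)
  rw [H, sub_neg, div_lt_div_iff₀ (exp_sub_one_pos hs) hs]
  nlinarith [mul_exp_half_lt_exp_sub_one hs]

lemma calH_neg {a x y : ℝ} (ha : 1 / 2 ≤ a) (hx : 0 < x) (hy : 0 < y) : calH a x y < 0 :=
  add_neg (div_neg_of_neg_of_pos (H_neg ha (by linarith)) (exp_sub_one_pos hy))
    (div_neg_of_neg_of_pos (H_neg (by norm_num) hy) (by linarith))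

lemma exp_le_cubic {s : ℝ} (h0 : 0 ≤ s) (h1 : s ≤ 1) :
    exp s ≤ 1 + s + s ^ 2 / 2 + 2 / 9 * s ^ 3 := by
  have := exp_bound' h0 h1 (n := 3) (by norm_num)
  norm_num [Finset.sum_range_succ, Nat.factorial] at this
  linarith

lemma exp_sub_one_lt_mul_exp {b s : ℝ} (hs0 : 0 < s) (hs1 : s ≤ 1) (hsb : s ≤ b - 1 / 2) :
    exp s - 1 < s * exp (b * s) := by
  have hlin : b * s + 1 ≤ exp (b * s) := add_one_le_exp _
  nlinarith [exp_le_cubic hs0.le hs1, mul_le_mul_of_nonneg_left hlin hs0.le, pow_pos hs0 3]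

lemma exists_H_pos {a : ℝ} (ha : a < 1 / 2) : ∃ s, 0 < s ∧ 0 < H a s := by
  set s := min 1 (1 / 2 - a)
  have hs0 : 0 < s := lt_min one_pos (by linarith)
  refine ⟨s, hs0, ?_⟩
  have key := exp_sub_one_lt_mul_exp (b := 1 - a) hs0 (min_le_left _ _)
    (by linarith [min_le_right 1 (1 / 2 - a)])
  rw [H, sub_pos, div_lt_div_iff₀ hs0 (exp_sub_one_pos hs0)]
  linarith

lemma neg_le_mul_H_one {y : ℝ} (hy0 : 0 < y) (hy1 : y ≤ 1) : -y ≤ (exp y - 1) * H 1 y := by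
  have hquad := (abs_le.1 (abs_exp_sub_one_sub_id_le (by rwa [abs_of_pos hy0]))).2
  have hexp := exp_sub_one_pos hy0
  have hquot : (exp y - 1) / y ≤ 1 + y := by
    rw [div_le_iff₀ hy0]
    nlinarith
  rw [H, sub_self, zero_mul, exp_zero, mul_sub, mul_one_div_cancel hexp.ne', mul_one_div]
  linarith

lemma calH_pos {a x y : ℝ} (hx : 0 < x) (hy0 : 0 < y) (hy1 : y ≤ 1)
    (hy : y < (x + y) * H a (x + y)) : 0 < calH a x y := by
  have hs : 0 < x + y := by linarith
  have hexp := exp_sub_one_pos hy0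
  have hbound := neg_le_mul_H_one hy0 hy1
  have hfirst : y / (x + y) < H a (x + y) := by rwa [div_lt_iff₀' hs]
  have hsecond : -y / (x + y) ≤ (exp y - 1) * H 1 y / (x + y) :=
    div_le_div_of_nonneg_right hbound hs.le
  rw [← mul_pos_iff_of_pos_left hexp, calH, mul_add, mul_div_cancel₀ _ hexp.ne', mul_div_assoc']
  rw [neg_div] at hsecond
  linarith

lemma exists_calH_pos {a : ℝ} (ha : a < 1 / 2) : ∃ x y, 0 < x ∧ 0 < y ∧ 0 < calH a x y := by
  obtain ⟨s, hs, hHs⟩ := exists_H_pos ha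
  set y := min 1 (min (s / 2) (s * H a s / 2))
  have hy0 : 0 < y := lt_min one_pos (lt_min (by linarith) (by positivity))
  have hys : y ≤ s / 2 := (min_le_right _ _).trans (min_le_left _ _)
  have hyH : y ≤ s * H a s / 2 := (min_le_right _ _).trans (min_le_right _ _)
  refine ⟨s - y, y, by linarith, hy0, calH_pos (by linarith) hy0 (min_le_left _ _) ?_⟩
  rw [sub_add_cancel]
  linarith [mul_pos hs hHs]

end CalH

theorem calH_neg_iff_general (a : ℝ) :
    (∀ x y : ℝ, 0 < x → 0 < y →
        (Real.exp ((1 - a) * (x + y)) / (Real.exp (x + y) - 1) - 1 / (x + y))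
            / (Real.exp y - 1)
          + (Real.exp ((1 - 1) * y) / (Real.exp y - 1) - 1 / y) / (x + y) < 0)
      ↔ 1 / 2 ≤ a := by
  change (∀ x y : ℝ, 0 < x → 0 < y → CalH.calH a x y < 0) ↔ 1 / 2 ≤ a
  refine ⟨fun hneg => ?_, fun ha x y hx hy => CalH.calH_neg ha hx hy⟩
  by_contra! ha
  obtain ⟨x, y, hx, hy, hpos⟩ := CalH.exists_calH_pos ha
  exact (hneg x y hx hy).not_gt hpos

/-- With H(a,x) = e^{(1-a)x}/(e^x − 1) − 1/x and
ℋ(a;x,y) = H(a,x+y)/(e^y − 1) + H(1,y)/(x+y), for 0 < a ≤ 1 we have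
ℋ(a;x,y) < 0 for all x, y > 0 if and only if a ≥ 1/2. -/
theorem calH_neg_iff (a : ℝ) (ha : 0 < a) (ha1 : a ≤ 1) :
    (∀ x y : ℝ, 0 < x → 0 < y →
        (Real.exp ((1 - a) * (x + y)) / (Real.exp (x + y) - 1) - 1 / (x + y))
            / (Real.exp y - 1)
          + (Real.exp ((1 - 1) * y) / (Real.exp y - 1) - 1 / y) / (x + y) < 0)
      ↔ 1 / 2 ≤ a :=
  calH_neg_iff_general a
end
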